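/- arXiv:0708.3557 — 4 statements merged into one kernel-verified Lean document; each statement's English description precedes it below -/
import Mathlib

section
/- For every integer n ≥ 1, the sum of μ^(e)(d) over all exponential divisors d of n equals μ(n)², where μ is the Möbius function. -/
open Nat ArithmeticFunction Finset
open scoped Classical

/-- `d` is an exponential divisor of `n`: same prime factors, and each exponent of `d`
divides the corresponding exponent of `n`. (By convention `1 ∣ₑ 1`.) -/
def IsExpDivisor (d n : ℕ) : Prop :=
  d.primeFactors = n.primeFactors ∧
    ∀ p ∈ n.primeFactors, d.factorization p ∣ n.factorization p

/-- The exponential Möbius function `μ^(e)`. -/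
noncomputable def muE (n : ℕ) : ℤ :=
  ∏ p ∈ n.primeFactors, moebius (n.factorization p)

/-!
An exponential divisor of `n = ∏ p ^ aₚ` is the same as a choice of exponents `bₚ ∣ aₚ`, one
for each prime `p ∣ n`, and `μ^(e)` of it is `∏ μ(bₚ)`. Hence the sum factors over the primes
as `∏_{p ∣ n} ∑_{b ∣ aₚ} μ(b) = ∏_{p ∣ n} [aₚ = 1]`, which is `1` if `n` is squarefree and `0`
otherwise, i.e. `μ(n)²`.
-/

theorem Finset.prod_sum_finsupp {ι α R : Type*} [Zero α] [CommSemiring R] (s : Finset ι)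
    (t : ι → Finset α) (g : ι → α → R) :
    ∏ i ∈ s, ∑ a ∈ t i, g i a = ∑ f ∈ s.finsupp t, ∏ i ∈ s, g i (f i) := by
  rw [Finset.finsupp, sum_map, prod_sum]
  refine sum_congr rfl fun p _ => ?_
  rw [← prod_attach s]
  exact prod_congr rfl fun i _ => by simp [Finsupp.indicator_of_mem i.2]

theorem ArithmeticFunction.sum_divisors_moebius (n : ℕ) :
    ∑ d ∈ n.divisors, moebius d = if n = 1 then 1 else 0 := by
  rw [← coe_mul_zeta_apply, moebius_mul_coe_zeta, one_apply]

theorem Nat.squarefree_iff_forall_factorization_eq_one {n : ℕ} (hn : n ≠ 0) :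
    Squarefree n ↔ ∀ p ∈ n.primeFactors, n.factorization p = 1 := by
  rw [squarefree_iff_factorization_le_one hn]
  refine ⟨fun h p hp => le_antisymm (h p) (one_le_iff_ne_zero.2 (Finsupp.mem_support_iff.1 hp)),
    fun h p => ?_⟩
  by_cases hp : p ∈ n.primeFactors
  · exact (h p hp).le
  · rw [Finsupp.notMem_support_iff.1 hp]; exact zero_le_one

noncomputable def expDivisorExponents (n : ℕ) : Finset (ℕ →₀ ℕ) :=
  n.primeFactors.finsupp fun p => (n.factorization p).divisors

theorem mem_expDivisorExponents {n : ℕ} {f : ℕ →₀ ℕ} :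
    f ∈ expDivisorExponents n ↔
      f.support = n.primeFactors ∧ ∀ p ∈ n.primeFactors, f p ∣ n.factorization p := by
  have hfac (p) (hp : p ∈ n.primeFactors) : n.factorization p ≠ 0 := Finsupp.mem_support_iff.1 hp
  simp only [expDivisorExponents, mem_finsupp_iff, Nat.mem_divisors]
  refine ⟨fun ⟨hsupp, hdvd⟩ => ⟨hsupp.antisymm fun p hp => ?_, fun p hp => (hdvd p hp).1⟩,
    fun ⟨hsupp, hdvd⟩ => ⟨hsupp.le, fun p hp => ⟨hdvd p hp, hfac p hp⟩⟩⟩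
  refine Finsupp.mem_support_iff.2 fun h0 => hfac p hp ?_
  simpa [h0] using (hdvd p hp).1

theorem isExpDivisor_iff_factorization_mem {d n : ℕ} :
    IsExpDivisor d n ↔ d.factorization ∈ expDivisorExponents n := by
  rw [mem_expDivisorExponents, support_factorization, IsExpDivisor]

theorem IsExpDivisor.dvd {d n : ℕ} (h : IsExpDivisor d n) (hd : d ≠ 0) (hn : n ≠ 0) : d ∣ n := by
  rw [← factorization_le_iff_dvd hd hn]
  intro p
  by_cases hp : p ∈ n.primeFactors
  · exact le_of_dvd (pos_of_ne_zero (Finsupp.mem_support_iff.1 hp)) (h.2 p hp)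
  · rw [← h.1] at hp
    rw [Finsupp.notMem_support_iff.1 hp]
    exact zero_le _

theorem sum_muE_expDivisors_eq_prod {n : ℕ} (hn : n ≠ 0) :
    ∑ d ∈ n.divisors.filter (fun d => IsExpDivisor d n), muE d =
      ∏ p ∈ n.primeFactors, ∑ b ∈ (n.factorization p).divisors, moebius b := by
  rw [prod_sum_finsupp]
  have hprime {f} (hf : f ∈ expDivisorExponents n) (p) (hp : p ∈ f.support) : p.Prime := by
    rw [(mem_expDivisorExponents.1 hf).1] at hp
    exact prime_of_mem_primeFactors hp
  refine sum_nbij' Nat.factorization (fun f => f.prod (· ^ ·)) ?_ ?_ ?_ ?_ ?_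
  · intro d hd
    exact isExpDivisor_iff_factorization_mem.1 (mem_filter.1 hd).2
  · intro f hf
    have hfac := prod_pow_factorization_eq_self (hprime hf)
    have hexp : IsExpDivisor (f.prod (· ^ ·)) n := by
      rwa [isExpDivisor_iff_factorization_mem, hfac]
    have hne : f.prod (· ^ ·) ≠ 0 :=
      Finsupp.prod_ne_zero_iff.2 fun p hp => pow_ne_zero _ (hprime hf p hp).ne_zero
    exact mem_filter.2 ⟨Nat.mem_divisors.2 ⟨hexp.dvd hne hn, hn⟩, hexp⟩
  · intro d hd
    exact prod_factorization_pow_eq_self (Nat.pos_of_mem_divisors (mem_filter.1 hd).1).ne'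
  · intro f hf
    exact prod_pow_factorization_eq_self (hprime hf)
  · intro d hd
    rw [muE, (mem_filter.1 hd).2.1]

theorem sum_muE_expDivisors_general (n : ℕ) :
    (∑ d ∈ n.divisors.filter (fun d => IsExpDivisor d n), muE d) = (moebius n) ^ 2 := by
  rcases eq_or_ne n 0 with rfl | hn
  · simp
  rw [sum_muE_expDivisors_eq_prod hn, moebius_sq,
    prod_congr rfl fun p _ => sum_divisors_moebius _, prod_boole]
  exact if_congr (squarefree_iff_forall_factorization_eq_one hn).symm rfl rfl

theorem sum_muE_expDivisors (n : ℕ) (hn : 1 ≤ n) :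
    (∑ d ∈ n.divisors.filter (fun d => IsExpDivisor d n), muE d) = (moebius n) ^ 2 :=
  sum_muE_expDivisors_general n
end

section
/- For every n ≥ 1, ℓ(n)·2^{ω(n)} = Σ_{d²e = n} τ(d)·h(e), where ℓ is the characteristic function of squarefull numbers, τ is the number-of-divisors function, and h is the multiplicative function determined by the Euler product with local factor 1 + 2p^{−3s} − p^{−4s} − 2p^{−5s}, i.e., h(p) = h(p²) = 0, h(p³) = 2, h(p⁴) = −1, h(p⁵) = −2, and h(p^a) = 0 for a ≥ 6. -/
open Nat ArithmeticFunction Finset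
open scoped Classical

/-- `n` is squarefull. -/
def Squarefull (n : ℕ) : Prop := ∀ p : ℕ, p.Prime → p ∣ n → p ^ 2 ∣ n

/-- Values of the multiplicative function `h` on prime powers `p^a` (`a ≥ 1`). -/
def hPP (a : ℕ) : ℤ :=
  if a = 3 then 2 else if a = 4 then -1 else if a = 5 then -2 else 0

/-- The multiplicative function `h` with Euler factor `1 + 2p^{-3s} - p^{-4s} - 2p^{-5s}`. -/
def hFun (n : ℕ) : ℤ := ∏ p ∈ n.primeFactors, hPP (n.factorization p)

/-!
Both sides are multiplicative in `n`. The left side has Euler factor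
`1 + 2x² + 2x³ + ⋯ = (1 - x + 2x²) / (1 - x)` in `x = p^{-s}`, and the right side is the Dirichlet
convolution of `h` with `g`, where `g (d²) = τ d` and `g` vanishes off the squares, so that `g` has
Euler factor `(1 - x²)⁻²`. The theorem is then the identity
`(1 - x + 2x²)(1 + x)(1 - x²) = 1 + 2x³ - x⁴ - 2x⁵`, checked coefficientwise at prime powers.
-/

namespace ArithmeticFunction

section ofExponents

variable {R : Type*} [CommMonoidWithZero R]

def ofExponents (F : ℕ → R) : ArithmeticFunction R :=
  ⟨fun n => if n = 0 then 0 else ∏ p ∈ n.primeFactors, F (n.factorization p), if_pos rfl⟩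

theorem ofExponents_apply (F : ℕ → R) {n : ℕ} (hn : n ≠ 0) :
    ofExponents F n = ∏ p ∈ n.primeFactors, F (n.factorization p) :=
  if_neg hn

theorem isMultiplicative_ofExponents (F : ℕ → R) : (ofExponents F).IsMultiplicative := by
  refine IsMultiplicative.iff_ne_zero.mpr ⟨by simp [ofExponents], fun {m n} hm hn hmn => ?_⟩
  rw [ofExponents_apply F (mul_ne_zero hm hn), ofExponents_apply F hm, ofExponents_apply F hn]
  simp only [← Nat.prod_factorization_eq_prod_primeFactors]
  rw [Nat.factorization_mul_of_coprime hmn]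
  refine Finsupp.prod_add_index_of_disjoint ?_ _
  simpa only [Nat.support_factorization] using hmn.disjoint_primeFactors

theorem ofExponents_apply_prime_pow (F : ℕ → R) {p k : ℕ} (hp : p.Prime) :
    ofExponents F (p ^ k) = if k = 0 then 1 else F k := by
  split_ifs with hk
  · simp [hk, ofExponents]
  · rw [ofExponents_apply F (pow_ne_zero k hp.ne_zero), Nat.primeFactors_prime_pow hk hp,
      prod_singleton, hp.factorization_pow, Finsupp.single_eq_same]

end ofExponents

theorem mul_apply_prime_pow {R : Type*} [Semiring R] {f g : ArithmeticFunction R} {p : ℕ}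
    (hp : p.Prime) (k : ℕ) :
    (f * g) (p ^ k) = ∑ i ∈ range (k + 1), f (p ^ (k - i)) * g (p ^ i) := by
  rw [mul_apply, Nat.sum_divisorsAntidiagonal' (fun x y => f x * g y),
    Nat.sum_divisors_prime_pow hp]
  refine sum_congr rfl fun i hi => ?_
  rw [Nat.pow_div (by simpa [Nat.lt_succ_iff] using hi) hp.pos]

end ArithmeticFunction

theorem Nat.isSquare_of_even_factorization {n : ℕ} (hn : n ≠ 0)
    (h : ∀ p ∈ n.primeFactors, Even (n.factorization p)) : IsSquare n := by
  refine ⟨n.factorization.prod fun p k => p ^ (k / 2), ?_⟩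
  rw [← Finsupp.prod_mul]
  conv_lhs => rw [← Nat.prod_factorization_pow_eq_self hn]
  refine Finsupp.prod_congr fun p hp => ?_
  rw [← pow_add, ← two_mul, Nat.two_mul_div_two_of_even (h p (by simpa using hp))]

theorem Nat.sum_divisors_eq_sum_sq_dvd {M : Type*} [AddCommMonoid M] {f : ℕ → M}
    (hf : ∀ e, ¬ IsSquare e → f e = 0) {n : ℕ} (hn : n ≠ 0) :
    ∑ e ∈ n.divisors, f e = ∑ d ∈ n.divisors, if d ^ 2 ∣ n then f (d ^ 2) else 0 := by
  have hsub : (n.divisors.filter (· ^ 2 ∣ n)).image (· ^ 2) ⊆ n.divisors := by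
    simp only [subset_iff, mem_image, mem_filter]
    rintro _ ⟨d, ⟨_, hd⟩, rfl⟩
    exact mem_divisors.mpr ⟨hd, hn⟩
  have hzero : ∀ e ∈ n.divisors, e ∉ (n.divisors.filter (· ^ 2 ∣ n)).image (· ^ 2) → f e = 0 := by
    refine fun e he hne => hf e ?_
    rintro ⟨c, rfl⟩
    have hc : c ^ 2 ∣ n := sq c ▸ dvd_of_mem_divisors he
    have hcn : c ∈ n.divisors := mem_divisors.mpr ⟨(dvd_pow_self c two_ne_zero).trans hc, hn⟩
    exact hne (mem_image.mpr ⟨c, mem_filter.mpr ⟨hcn, hc⟩, sq c⟩)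
  rw [← sum_subset hsub hzero, sum_image fun a _ b _ h => Nat.pow_left_injective two_ne_zero h,
    sum_filter]

theorem squarefull_iff_two_le_factorization {n : ℕ} (hn : n ≠ 0) :
    Squarefull n ↔ ∀ p ∈ n.primeFactors, 2 ≤ n.factorization p := by
  simp only [Squarefull, mem_primeFactors_of_ne_zero hn, and_imp]
  exact forall₃_congr fun p hp _ => hp.pow_dvd_iff_le_factorization hn

def squarefullTwoPow : ArithmeticFunction ℤ := ofExponents fun k => if 2 ≤ k then 2 else 0

theorem squarefullTwoPow_apply {n : ℕ} (hn : n ≠ 0) :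
    squarefullTwoPow n = (if Squarefull n then 1 else 0) * 2 ^ n.primeFactors.card := by
  rw [squarefullTwoPow, ofExponents_apply _ hn, prod_ite_zero, prod_const]
  simp only [← squarefull_iff_two_le_factorization hn]
  split_ifs <;> simp

def tauOfSqrt : ArithmeticFunction ℤ := ofExponents fun k => if Even k then (k / 2 + 1 : ℕ) else 0

theorem tauOfSqrt_sq {d : ℕ} (hd : d ≠ 0) : tauOfSqrt (d ^ 2) = d.divisors.card := by
  rw [tauOfSqrt, ofExponents_apply _ (pow_ne_zero 2 hd), Nat.primeFactors_pow d two_ne_zero,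
    Nat.card_divisors hd, Nat.cast_prod]
  refine prod_congr rfl fun p _ => ?_
  simp [Nat.factorization_pow]

theorem tauOfSqrt_eq_zero_of_not_isSquare {n : ℕ} (hn : ¬ IsSquare n) : tauOfSqrt n = 0 := by
  rcases eq_or_ne n 0 with rfl | hn0
  · exact ArithmeticFunction.map_zero
  rw [tauOfSqrt, ofExponents_apply _ hn0]
  contrapose! hn
  refine Nat.isSquare_of_even_factorization hn0 fun p hp => ?_
  by_contra hodd
  exact hn (prod_eq_zero hp (if_neg hodd))

theorem tauOfSqrt_mul_ofExponents_hPP_apply_prime_pow {p : ℕ} (hp : p.Prime) (k : ℕ) :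
    (tauOfSqrt * ofExponents hPP) (p ^ k) = squarefullTwoPow (p ^ k) := by
  rw [mul_apply_prime_pow hp, tauOfSqrt, squarefullTwoPow]
  simp only [ofExponents_apply_prime_pow _ hp]
  rcases Nat.lt_or_ge k 5 with hk | hk
  · interval_cases k <;> decide
  obtain ⟨m, rfl⟩ := Nat.exists_eq_add_of_le' hk
  have htail : ∀ i, hPP (6 + i) = 0 := fun i => by simp only [hPP]; split_ifs <;> omega
  rw [show m + 5 + 1 = 6 + m by ring, sum_range_add,
    sum_eq_zero (s := range m) fun i _ => by simp [htail], add_zero]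
  norm_num [sum_range_succ, hPP, Nat.even_iff]
  split_ifs <;> omega

theorem tauOfSqrt_mul_ofExponents_hPP : tauOfSqrt * ofExponents hPP = squarefullTwoPow :=
  (IsMultiplicative.eq_iff_eq_on_prime_powers _
    ((isMultiplicative_ofExponents _).mul (isMultiplicative_ofExponents _)) _
    (isMultiplicative_ofExponents _)).mpr fun _ k hp =>
      tauOfSqrt_mul_ofExponents_hPP_apply_prime_pow hp k

theorem squarefull_twoPowOmega_eq_sum (n : ℕ) (hn : 1 ≤ n) :
    ((if Squarefull n then 1 else 0) * 2 ^ n.primeFactors.card : ℤ) =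
      ∑ d ∈ n.divisors,
        if d ^ 2 ∣ n then (d.divisors.card : ℤ) * hFun (n / d ^ 2) else 0 := by
  have hn0 : n ≠ 0 := Nat.one_le_iff_ne_zero.mp hn
  have hsq : ∀ e, ¬ IsSquare e → tauOfSqrt e * ofExponents hPP (n / e) = 0 := fun e he => by
    rw [tauOfSqrt_eq_zero_of_not_isSquare he, zero_mul]
  rw [← squarefullTwoPow_apply hn0, ← tauOfSqrt_mul_ofExponents_hPP, mul_apply,
    Nat.sum_divisorsAntidiagonal (fun e m => tauOfSqrt e * ofExponents hPP m),
    Nat.sum_divisors_eq_sum_sq_dvd hsq hn0]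
  refine sum_congr rfl fun d hd => ?_
  split_ifs with hdn
  · have hd0 : d ≠ 0 := ne_of_gt (pos_of_mem_divisors hd)
    have hquot : n / d ^ 2 ≠ 0 := (Nat.div_ne_zero_iff_of_dvd hdn).mpr ⟨hn0, pow_ne_zero 2 hd0⟩
    rw [tauOfSqrt_sq hd0, ofExponents_apply _ hquot, hFun]
  · rfl
end

section
/- Let v = t^(e) * f where f = μ₂ * μ as above. Then v is multiplicative with v(p) = v(p²) = v(p³) = 0 and v(p^a) = 2^{ω(a)} − 2^{ω(a−1)} − 2^{ω(a−2)} + 2^{ω(a−3)} for a ≥ 4. -/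
/-!
At a prime `p`, `μ₂ * μ` takes the values `1, -1, -1, 1, 0, 0, …` at `1, p, p², p³, …` (its Bell
series is `(1 - x²)(1 - x)`), so convolving with it turns `a ↦ f (p ^ a)` into
`f (p ^ a) - f (p ^ (a - 1)) - f (p ^ (a - 2)) + f (p ^ (a - 3))`, terms with negative exponent
omitted. For `f = t^(e)` the values `2 ^ ω(a)` at `a = 0, 1, 2, 3` are `1, 1, 2, 2`, whence the
vanishing at `p`, `p²` and `p³`.
-/

open Nat ArithmeticFunction Finset
open scoped Classical

/-- `t^(e)` as an arithmetic function: `t^(e)(p^a) = 2^{ω(a)}`. -/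
noncomputable def tE : ArithmeticFunction ℤ :=
  ⟨fun n => if n = 0 then 0
    else ∏ p ∈ n.primeFactors, 2 ^ (n.factorization p).primeFactors.card, by simp⟩

/-- `μ₂(n) = μ(m)` if `n = m²`, and `0` otherwise. -/
noncomputable def mu2 : ArithmeticFunction ℤ :=
  ⟨fun n => if IsSquare n then moebius (Nat.sqrt n) else 0, by simp⟩

theorem Nat.Coprime.isSquare_mul_iff {m n : ℕ} (h : m.Coprime n) :
    IsSquare (m * n) ↔ IsSquare m ∧ IsSquare n := by
  refine ⟨fun ⟨c, hc⟩ => ?_, fun ⟨hm, hn⟩ => hm.mul hn⟩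
  have hc2 : m * n = c ^ 2 := by rw [hc, sq]
  obtain ⟨a, ha⟩ := exists_eq_pow_of_mul_eq_pow (Nat.isUnit_iff.mpr h) hc2
  obtain ⟨b, hb⟩ := exists_eq_pow_of_mul_eq_pow (Nat.isUnit_iff.mpr h.symm)
    ((mul_comm n m).trans hc2)
  exact ⟨⟨a, by rw [ha, sq]⟩, ⟨b, by rw [hb, sq]⟩⟩

theorem Nat.Prime.isSquare_pow_iff {p : ℕ} (hp : p.Prime) {k : ℕ} :
    IsSquare (p ^ k) ↔ Even k := by
  refine ⟨fun ⟨r, hr⟩ => ?_, fun hk => hk.isSquare_pow p⟩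
  have := congrArg (fun n => n.factorization p) (hr.trans (sq r).symm)
  simp only [hp.factorization_pow, Finsupp.single_eq_same, Nat.factorization_pow,
    Finsupp.smul_apply, smul_eq_mul] at this
  exact this ▸ even_two_mul _

lemma tE_apply {n : ℕ} (hn : n ≠ 0) :
    tE n = n.factorization.prod fun _ k => 2 ^ k.primeFactors.card := if_neg hn

lemma tE_apply_prime_pow {p : ℕ} (hp : p.Prime) (a : ℕ) :
    tE (p ^ a) = 2 ^ a.primeFactors.card := by
  rw [tE_apply (pow_ne_zero a hp.ne_zero), hp.factorization_pow,
    Finsupp.prod_single_index (by simp)]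

lemma tE_apply_prime {p : ℕ} (hp : p.Prime) : tE p = 1 := by
  simpa using tE_apply_prime_pow hp 1

lemma isMultiplicative_tE : tE.IsMultiplicative := by
  refine IsMultiplicative.iff_ne_zero.mpr ⟨by simp [tE], fun {m n} hm hn hmn => ?_⟩
  rw [tE_apply (mul_ne_zero hm hn), tE_apply hm, tE_apply hn,
    Nat.factorization_mul_of_coprime hmn,
    Finsupp.prod_add_index_of_disjoint hmn.disjoint_primeFactors]

lemma mu2_mul_self (m : ℕ) : mu2 (m * m) = moebius m := by
  simp [mu2, Nat.sqrt_eq]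

lemma mu2_one : mu2 1 = 1 := by
  simpa using mu2_mul_self 1

lemma mu2_of_not_isSquare {n : ℕ} (hn : ¬IsSquare n) : mu2 n = 0 := by
  simp [mu2, hn]

lemma isMultiplicative_mu2 : mu2.IsMultiplicative := by
  refine IsMultiplicative.iff_ne_zero.mpr ⟨mu2_one, fun {m n} _ _ hmn => ?_⟩
  by_cases hsq : IsSquare m ∧ IsSquare n
  · obtain ⟨⟨a, rfl⟩, ⟨b, rfl⟩⟩ := hsq
    have hab : a.Coprime b := Nat.Coprime.coprime_mul_left (Nat.Coprime.coprime_mul_left_right hmn)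
    rw [show a * a * (b * b) = a * b * (a * b) by ring, mu2_mul_self, mu2_mul_self,
      mu2_mul_self, isMultiplicative_moebius.map_mul_of_coprime hab]
  · rw [mu2_of_not_isSquare (hmn.isSquare_mul_iff.not.mpr hsq)]
    rcases not_and_or.mp hsq with h | h <;> simp [mu2_of_not_isSquare h]

lemma moebius_apply_prime_pow' {p : ℕ} (hp : p.Prime) (k : ℕ) :
    moebius (p ^ k) = if k = 0 then 1 else if k = 1 then -1 else 0 := by
  rcases eq_or_ne k 0 with rfl | hk
  · simp
  · rw [moebius_apply_prime_pow hp hk, if_neg hk]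

lemma mu2_apply_prime_pow {p : ℕ} (hp : p.Prime) (k : ℕ) :
    mu2 (p ^ k) = if k = 0 then 1 else if k = 2 then -1 else 0 := by
  rcases Nat.even_or_odd' k with ⟨j, rfl | rfl⟩
  · rw [two_mul, pow_add, mu2_mul_self, moebius_apply_prime_pow' hp]
    grind
  · rw [mu2_of_not_isSquare (by simp [hp.isSquare_pow_iff])]
    grind

theorem ArithmeticFunction.mul_apply_prime_pow_s13 {R : Type*} [Semiring R]
    (f g : ArithmeticFunction R) {p : ℕ} (hp : p.Prime) (a : ℕ) :
    (f * g) (p ^ a) = ∑ i ∈ range (a + 1), f (p ^ (a - i)) * g (p ^ i) := by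
  rw [mul_apply, Nat.sum_divisorsAntidiagonal' (f := fun x y => f x * g y),
    Nat.sum_divisors_prime_pow hp]
  refine sum_congr rfl fun i hi => ?_
  rw [Nat.pow_div (Nat.lt_succ_iff.mp (mem_range.mp hi)) hp.pos]

lemma mu2_mul_moebius_apply_prime_pow {p : ℕ} (hp : p.Prime) (c : ℕ) :
    (mu2 * moebius) (p ^ c) =
      if c = 0 then 1 else if c = 1 then -1 else if c = 2 then -1 else if c = 3 then 1 else 0 := by
  rw [mul_apply_prime_pow_s13 _ _ hp]
  rcases lt_or_ge c 4 with hc | hc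
  · interval_cases c <;>
      simp [sum_range_succ, mu2_one, mu2_apply_prime_pow hp, moebius_apply_prime_pow' hp]
  · rw [if_neg (by omega), if_neg (by omega), if_neg (by omega), if_neg (by omega)]
    refine sum_eq_zero fun i hi => ?_
    rw [mu2_apply_prime_pow hp, moebius_apply_prime_pow' hp]
    grind

section

variable (f : ArithmeticFunction ℤ) {p : ℕ}

lemma mul_mu2_mul_moebius_apply_prime (hp : p.Prime) :
    (f * (mu2 * moebius)) p = f p - f 1 := by
  have h := mul_apply_prime_pow_s13 f (mu2 * moebius) hp 1
  rw [pow_one] at h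
  simp [h, sum_range_succ, mu2_mul_moebius_apply_prime_pow hp, sub_eq_add_neg]

lemma mul_mu2_mul_moebius_apply_prime_sq (hp : p.Prime) :
    (f * (mu2 * moebius)) (p ^ 2) = f (p ^ 2) - f p - f 1 := by
  simp [mul_apply_prime_pow_s13 f _ hp, sum_range_succ, mu2_mul_moebius_apply_prime_pow hp,
    sub_eq_add_neg]

lemma mul_mu2_mul_moebius_apply_prime_pow (hp : p.Prime) {a : ℕ} (ha : 3 ≤ a) :
    (f * (mu2 * moebius)) (p ^ a) =
      f (p ^ a) - f (p ^ (a - 1)) - f (p ^ (a - 2)) + f (p ^ (a - 3)) := by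
  rw [mul_apply_prime_pow_s13 f _ hp, ← sum_subset (range_subset_range.mpr (by omega : 4 ≤ a + 1))]
  · simp [sum_range_succ, mu2_mul_moebius_apply_prime_pow hp, sub_eq_add_neg]
  · intro i _ hi
    rw [mu2_mul_moebius_apply_prime_pow hp]
    grind

end

theorem v_prime_power_values :
    (tE * (mu2 * moebius)).IsMultiplicative ∧
      ∀ p : ℕ, p.Prime →
        (tE * (mu2 * moebius)) p = 0 ∧ (tE * (mu2 * moebius)) (p ^ 2) = 0 ∧
          (tE * (mu2 * moebius)) (p ^ 3) = 0 ∧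
          ∀ a : ℕ, 4 ≤ a →
            (tE * (mu2 * moebius)) (p ^ a) =
              2 ^ a.primeFactors.card - 2 ^ (a - 1).primeFactors.card -
                2 ^ (a - 2).primeFactors.card + 2 ^ (a - 3).primeFactors.card := by
  refine ⟨isMultiplicative_tE.mul (isMultiplicative_mu2.mul isMultiplicative_moebius),
    fun p hp => ⟨?_, ?_, ?_, fun a ha => ?_⟩⟩
  · simp [mul_mu2_mul_moebius_apply_prime tE hp, tE_apply_prime hp, isMultiplicative_tE.map_one]
  · simp [mul_mu2_mul_moebius_apply_prime_sq tE hp, tE_apply_prime hp, isMultiplicative_tE.map_one,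
      tE_apply_prime_pow hp, Nat.prime_two.primeFactors]
  · simp [mul_mu2_mul_moebius_apply_prime_pow tE hp le_rfl, tE_apply_prime hp,
      isMultiplicative_tE.map_one, tE_apply_prime_pow hp, Nat.prime_two.primeFactors,
      Nat.prime_three.primeFactors]
  · simp only [mul_mu2_mul_moebius_apply_prime_pow tE hp (by omega : 3 ≤ a), tE_apply_prime_pow hp]
end

section
/- The identity t^(e) = v * τ(1,2,·) holds, where τ(1,2,n) = Σ_{ab²=n} 1 counts representations n = ab², and v is the multiplicative function with v(p) = v(p²) = v(p³) = 0 and v(p^a) = 2^{ω(a)} − 2^{ω(a−1)} − 2^{ω(a−2)} + 2^{ω(a−3)} for a ≥ 4. -/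
/-!
Both sides are multiplicative, so it suffices to compare their Bell series
`∑ₖ f(pᵏ) Xᵏ` at each prime `p`, and the Bell series of a Dirichlet convolution is the product of
the Bell series. For `t^(e)` it is `∑ₖ 2^{ω(k)} Xᵏ`; for `τ(1,2,·)` it is
`∑ₖ (⌊k/2⌋ + 1) Xᵏ = 1 / ((1 - X)(1 - X²))`, because `b² ∣ n` exactly when
`b ∣ ∏ₚ p^{⌊vₚ(n)/2⌋}`; and the values prescribed for `v` say precisely that its Bell series is
`(∑ₖ 2^{ω(k)} Xᵏ) (1 - X)(1 - X²)`.
-/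

open Nat ArithmeticFunction Finset
open scoped Classical

/-- `τ(1,2,n) = #{(a,b) : ab² = n}`, i.e. the number of `b` with `b² ∣ n`. -/
noncomputable def tau12 : ArithmeticFunction ℤ :=
  ⟨fun n => if n = 0 then 0
    else ((n.divisors.filter (fun b => b ^ 2 ∣ n)).card : ℤ), by simp⟩

open PowerSeries

namespace ArithmeticFunction

section FactorizationProd

variable {R : Type*} [CommMonoidWithZero R]

noncomputable def factorizationProd (g : ℕ → R) : ArithmeticFunction R :=
  ⟨fun n => if n = 0 then 0 else n.factorization.prod fun _ k => g k, if_pos rfl⟩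

theorem factorizationProd_apply (g : ℕ → R) {n : ℕ} (hn : n ≠ 0) :
    factorizationProd g n = n.factorization.prod fun _ k => g k :=
  if_neg hn

theorem isMultiplicative_factorizationProd (g : ℕ → R) :
    (factorizationProd g).IsMultiplicative := by
  refine ⟨by simp [factorizationProd_apply], fun {m n} hmn => ?_⟩
  rcases eq_or_ne m 0 with rfl | hm
  · simp [factorizationProd]
  rcases eq_or_ne n 0 with rfl | hn
  · simp [factorizationProd]
  rw [factorizationProd_apply g (mul_ne_zero hm hn), factorizationProd_apply g hm,
    factorizationProd_apply g hn, Nat.factorization_mul_of_coprime hmn,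
    Finsupp.prod_add_index_of_disjoint hmn.disjoint_primeFactors]

theorem factorizationProd_apply_prime_pow {g : ℕ → R} (hg : g 0 = 1) {p : ℕ} (hp : p.Prime)
    (k : ℕ) : factorizationProd g (p ^ k) = g k := by
  rw [factorizationProd_apply g (pow_ne_zero k hp.ne_zero), hp.factorization_pow,
    Finsupp.prod_single_index hg]

end FactorizationProd

section BellSeries

variable {R : Type*} [Semiring R]

noncomputable def bellSeries (p : ℕ) (f : ArithmeticFunction R) : PowerSeries R :=
  mk fun k => f (p ^ k)

theorem coeff_bellSeries (p : ℕ) (f : ArithmeticFunction R) (k : ℕ) :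
    coeff k (bellSeries p f) = f (p ^ k) :=
  coeff_mk _ _

theorem bellSeries_mul {p : ℕ} (hp : p.Prime) (f g : ArithmeticFunction R) :
    bellSeries p (f * g) = bellSeries p f * bellSeries p g := by
  ext a
  rw [coeff_mul, Finset.Nat.sum_antidiagonal_eq_sum_range_succ
    (fun i j => coeff i (bellSeries p f) * coeff j (bellSeries p g))]
  simp only [coeff_bellSeries, mul_apply, Nat.sum_divisorsAntidiagonal (fun x y => f x * g y),
    Nat.sum_divisors_prime_pow hp]
  refine sum_congr rfl fun i hi => ?_
  rw [Nat.pow_div (mem_range_succ_iff.1 hi) hp.pos]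

end BellSeries

theorem bellSeries_factorizationProd {R : Type*} [CommSemiring R] {g : ℕ → R} (hg : g 0 = 1)
    {p : ℕ} (hp : p.Prime) :
    bellSeries p (factorizationProd g) = mk g := by
  ext k
  rw [coeff_bellSeries, factorizationProd_apply_prime_pow hg hp, coeff_mk]

end ArithmeticFunction

namespace PowerSeries

variable {R : Type*} [CommRing R]

theorem coeff_mul_one_sub_X_mul_one_sub_X_sq (F : PowerSeries R) (n : ℕ) :
    coeff n (F * ((1 - X) * (1 - X ^ 2))) =
      coeff n F - (if 1 ≤ n then coeff (n - 1) F else 0) -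
        (if 2 ≤ n then coeff (n - 2) F else 0) + (if 3 ≤ n then coeff (n - 3) F else 0) := by
  have : F * ((1 - X) * (1 - X ^ 2)) = F - F * X ^ 1 - F * X ^ 2 + F * X ^ 3 := by ring
  simp only [this, map_add, map_sub, coeff_mul_X_pow']

theorem mk_div_two_add_one_mul_one_sub_X_mul_one_sub_X_sq :
    (mk fun k => ((k / 2 + 1 : ℕ) : ℤ)) * ((1 - X) * (1 - X ^ 2)) = 1 := by
  ext n
  rw [coeff_mul_one_sub_X_mul_one_sub_X_sq, coeff_one]
  simp only [coeff_mk]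
  split_ifs <;> omega

end PowerSeries

open ArithmeticFunction

theorem tE_eq_factorizationProd :
    tE = factorizationProd fun k => (2 : ℤ) ^ k.primeFactors.card := by
  ext n
  simp only [tE, factorizationProd, coe_mk, Finsupp.prod, Nat.support_factorization]

theorem tau12_eq_factorizationProd : tau12 = factorizationProd fun k => ((k / 2 + 1 : ℕ) : ℤ) := by
  ext n
  rcases eq_or_ne n 0 with rfl | hn
  · rfl
  have hroot : floorRoot 2 n ≠ 0 := floorRoot_ne_zero.2 ⟨two_ne_zero, hn⟩
  have hdiv : n.divisors.filter (fun b => b ^ 2 ∣ n) = (floorRoot 2 n).divisors := by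
    ext b
    rw [mem_filter, Nat.mem_divisors, Nat.mem_divisors, ← pow_dvd_iff_dvd_floorRoot]
    exact ⟨fun h => ⟨h.2, hroot⟩, fun h => ⟨⟨(dvd_pow_self b two_ne_zero).trans h.1, hn⟩, h.1⟩⟩
  rw [factorizationProd_apply _ hn, tau12, coe_mk, if_neg hn, hdiv, Nat.card_divisors hroot,
    ← Nat.support_factorization]
  change (((floorRoot 2 n).factorization.prod fun _ k => k + 1 : ℕ) : ℤ) = _
  rw [factorization_floorRoot, Finsupp.floorDiv_def,
    Finsupp.prod_mapRange_index (by simp), Nat.cast_finsuppProd]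
  rfl

theorem bellSeries_eq_mul_one_sub_X_mul_one_sub_X_sq {v : ArithmeticFunction ℤ} (hv : v 1 = 1)
    {p : ℕ} (hval : v p = 0 ∧ v (p ^ 2) = 0 ∧ v (p ^ 3) = 0 ∧
        ∀ a : ℕ, 4 ≤ a →
          v (p ^ a) =
            2 ^ a.primeFactors.card - 2 ^ (a - 1).primeFactors.card -
              2 ^ (a - 2).primeFactors.card + 2 ^ (a - 3).primeFactors.card) :
    bellSeries p v = (mk fun k => (2 : ℤ) ^ k.primeFactors.card) * ((1 - X) * (1 - X ^ 2)) := by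
  obtain ⟨hv1, hv2, hv3, hv4⟩ := hval
  ext n
  rw [coeff_bellSeries, coeff_mul_one_sub_X_mul_one_sub_X_sq]
  simp only [coeff_mk]
  rcases n with _ | _ | _ | _ | n
  · simp [hv]
  · simp [hv1]
  · simp [hv2, Nat.prime_two.primeFactors]
  · simp [hv3, Nat.prime_two.primeFactors, Nat.prime_three.primeFactors]
  · rw [hv4 _ (by omega)]
    simp

theorem tE_eq_v_conv_tau12 (v : ArithmeticFunction ℤ) (hv : v.IsMultiplicative)
    (hval : ∀ p : ℕ, p.Prime →
      v p = 0 ∧ v (p ^ 2) = 0 ∧ v (p ^ 3) = 0 ∧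
        ∀ a : ℕ, 4 ≤ a →
          v (p ^ a) =
            2 ^ a.primeFactors.card - 2 ^ (a - 1).primeFactors.card -
              2 ^ (a - 2).primeFactors.card + 2 ^ (a - 3).primeFactors.card) :
    tE = v * tau12 := by
  rw [tE_eq_factorizationProd, tau12_eq_factorizationProd]
  refine (IsMultiplicative.eq_iff_eq_on_prime_powers _ (isMultiplicative_factorizationProd _) _
    (hv.mul (isMultiplicative_factorizationProd _))).2 fun p k hp => ?_
  have hbell : bellSeries p (factorizationProd fun k => (2 : ℤ) ^ k.primeFactors.card) =
      bellSeries p (v * factorizationProd fun k => ((k / 2 + 1 : ℕ) : ℤ)) := by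
    rw [bellSeries_mul hp, bellSeries_eq_mul_one_sub_X_mul_one_sub_X_sq hv.map_one (hval p hp),
      bellSeries_factorizationProd (by simp) hp, bellSeries_factorizationProd (by simp) hp]
    linear_combination (-(mk fun k => (2 : ℤ) ^ k.primeFactors.card)) *
      mk_div_two_add_one_mul_one_sub_X_mul_one_sub_X_sq
  simpa only [coeff_bellSeries] using congrArg (coeff k) hbell
end
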